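/- arXiv:2209.12565 — 3 statements merged into one kernel-verified Lean document; each statement's English description precedes it below -/
import Mathlib

section
/- Let N, M be positive integers, let Λ ∈ ℝ^{M×M} be an orthogonal matrix, let Σ̄ ∈ ℝ^{NM×NM} be symmetric positive definite, and set Σ = (I_N ⊗ Λ) Σ̄ (I_N ⊗ Λᵀ). Suppose Γ ∈ ℝ^{NM×NM} is lower unitriangular and E_1, …, E_N ∈ ℝ^{M×M} are positive definite matrices with Γ Σ̄ Γᵀ = blkdiag(E_1, …, E_N). Let Y ∈ ℝ^{NM}, set Θ = Γ (I_N ⊗ Λᵀ) Y, and let ē_j ∈ ℝ^M denote the j-th block of Θ (entries (j−1)M+1 through jM). Then Yᵀ Σ^{−1} Y = Σ_{j=1}^N ē_jᵀ E_j^{−1} ē_j. -/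
open Matrix
open scoped Kronecker

/-- A matrix indexed by `Fin N × Fin M` (ordered lexicographically) is lower unitriangular if
its diagonal entries are all `1` and all entries strictly above the diagonal vanish. -/
def IsLowerUnitriangular {N M : ℕ}
    (Γ : Matrix (Fin N × Fin M) (Fin N × Fin M) ℝ) : Prop :=
  (∀ p, Γ p p = 1) ∧
  ∀ p q : Fin N × Fin M, (p.1 < q.1 ∨ (p.1 = q.1 ∧ p.2 < q.2)) → Γ p q = 0

/-- The `NM × NM` block diagonal matrix with diagonal blocks `E 0, …, E (N-1)`. -/
def blkdiag {N M : ℕ} (E : Fin N → Matrix (Fin M) (Fin M) ℝ) :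
    Matrix (Fin N × Fin M) (Fin N × Fin M) ℝ :=
  Matrix.of fun p q => if p.1 = q.1 then E p.1 p.2 q.2 else 0

lemma blkdiag_mul_blkdiag {N M : ℕ} (E F : Fin N → Matrix (Fin M) (Fin M) ℝ) :
    blkdiag E * blkdiag F = blkdiag (fun j => E j * F j) := by
  ext ⟨j, m⟩ ⟨k, l⟩
  simp only [blkdiag, Matrix.mul_apply, Matrix.of_apply, Fintype.sum_prod_type]
  rw [Finset.sum_eq_single j]
  · by_cases h : j = k <;> simp [h, Matrix.mul_apply]
  · intro r _ hr
    simp [Ne.symm hr]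
  · simp

lemma blkdiag_one {N M : ℕ} :
    blkdiag (fun _ : Fin N => (1 : Matrix (Fin M) (Fin M) ℝ)) = 1 := by
  ext ⟨j, m⟩ ⟨k, l⟩
  simp only [blkdiag, Matrix.of_apply, Matrix.one_apply, Prod.mk.injEq]
  by_cases h : j = k <;> by_cases h' : m = l <;> simp [h, h']

/-- Quadratic-form identity of Proposition 2: with `Σ = (I_N ⊗ Λ) Σ̄ (I_N ⊗ Λᵀ)`, `Λ`
orthogonal, `Σ̄` positive definite, `Γ Σ̄ Γᵀ = blkdiag(E_1, …, E_N)` for `Γ` lower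
unitriangular and each `Eⱼ` positive definite, and `Θ = Γ (I_N ⊗ Λᵀ) Y` with `j`-th block
`ēⱼ`, one has `Yᵀ Σ⁻¹ Y = Σⱼ ēⱼᵀ Eⱼ⁻¹ ēⱼ`. -/
theorem quadratic_form_via_innovations (N M : ℕ) (hN : 0 < N) (hM : 0 < M)
    (Λ : Matrix (Fin M) (Fin M) ℝ) (hΛ : Λ * Λᵀ = 1 ∧ Λᵀ * Λ = 1)
    (S : Matrix (Fin N × Fin M) (Fin N × Fin M) ℝ) (hS : S.PosDef)
    (Sig : Matrix (Fin N × Fin M) (Fin N × Fin M) ℝ)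
    (hSig : Sig = ((1 : Matrix (Fin N) (Fin N) ℝ) ⊗ₖ Λ) * S
        * ((1 : Matrix (Fin N) (Fin N) ℝ) ⊗ₖ Λᵀ))
    (Γ : Matrix (Fin N × Fin M) (Fin N × Fin M) ℝ) (hΓ : IsLowerUnitriangular Γ)
    (E : Fin N → Matrix (Fin M) (Fin M) ℝ) (hEpos : ∀ j, (E j).PosDef)
    (hE : Γ * S * Γᵀ = blkdiag E)
    (Y : Fin N × Fin M → ℝ)
    (Θ : Fin N × Fin M → ℝ)
    (hΘ : Θ = (Γ * ((1 : Matrix (Fin N) (Fin N) ℝ) ⊗ₖ Λᵀ)).mulVec Y) :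
    Y ⬝ᵥ Sig⁻¹.mulVec Y
      = ∑ j : Fin N, (fun m => Θ (j, m)) ⬝ᵥ (E j)⁻¹.mulVec (fun m => Θ (j, m)) := by
  set U : Matrix (Fin N × Fin M) (Fin N × Fin M) ℝ :=
    (1 : Matrix (Fin N) (Fin N) ℝ) ⊗ₖ Λ with hU
  have hUt : Uᵀ = (1 : Matrix (Fin N) (Fin N) ℝ) ⊗ₖ Λᵀ := by
    rw [hU, ← Matrix.kroneckerMap_transpose, Matrix.transpose_one]
  have hUUt : U * Uᵀ = 1 := by
    rw [hUt, hU, ← Matrix.mul_kronecker_mul, one_mul, hΛ.1, Matrix.one_kronecker_one]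
  have hUtU : Uᵀ * U = 1 := by
    rw [hUt, hU, ← Matrix.mul_kronecker_mul, one_mul, hΛ.2, Matrix.one_kronecker_one]
  -- E j invertible
  have hEinv : ∀ j, E j * (E j)⁻¹ = 1 := fun j =>
    Matrix.mul_nonsing_inv _ (hEpos j).det_pos.ne'.isUnit
  -- blkdiag E has explicit inverse
  have hDinv : blkdiag E * blkdiag (fun j => (E j)⁻¹) = 1 := by
    rw [blkdiag_mul_blkdiag,
      show (fun j => E j * (E j)⁻¹) = fun _ : Fin N => (1 : Matrix (Fin M) (Fin M) ℝ)
        from funext hEinv, blkdiag_one]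
  have hDinv' : (blkdiag E)⁻¹ = blkdiag (fun j => (E j)⁻¹) :=
    Matrix.inv_eq_right_inv hDinv
  -- Γ invertible
  have hΓdet : IsUnit Γ.det := by
    have h1 : IsUnit (Γ * S * Γᵀ).det := by
      rw [hE]; exact Matrix.isUnit_det_of_right_inverse hDinv
    rw [Matrix.det_mul, Matrix.det_mul] at h1
    exact isUnit_of_mul_isUnit_left (isUnit_of_mul_isUnit_left h1)
  have hΓΓinv : Γ * Γ⁻¹ = 1 := Matrix.mul_nonsing_inv _ hΓdet
  have hΓinvΓ : Γ⁻¹ * Γ = 1 := Matrix.nonsing_inv_mul _ hΓdet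
  -- S⁻¹ = Γᵀ (blkdiag E)⁻¹ Γ
  have hSinv : S⁻¹ = Γᵀ * (blkdiag E)⁻¹ * Γ := by
    apply Matrix.inv_eq_right_inv
    have hSΓt : S * Γᵀ = Γ⁻¹ * blkdiag E := by
      rw [← hE]
      rw [Matrix.mul_assoc Γ S Γᵀ, ← Matrix.mul_assoc Γ⁻¹, hΓinvΓ, one_mul]
    simp only [← Matrix.mul_assoc]
    rw [hSΓt, Matrix.mul_assoc Γ⁻¹ (blkdiag E) (blkdiag E)⁻¹, hDinv', hDinv, mul_one, hΓinvΓ]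
  -- Sig⁻¹ = U S⁻¹ Uᵀ
  have hSdet := hS.det_pos.ne'.isUnit
  have hSiginv : Sig⁻¹ = U * S⁻¹ * Uᵀ := by
    apply Matrix.inv_eq_right_inv
    rw [hSig, ← hUt]
    rw [Matrix.mul_assoc (U * S) Uᵀ, ← Matrix.mul_assoc Uᵀ (U * S⁻¹) Uᵀ,
      ← Matrix.mul_assoc Uᵀ U S⁻¹, hUtU, one_mul, ← Matrix.mul_assoc,
      Matrix.mul_assoc U S S⁻¹, Matrix.mul_nonsing_inv _ hSdet, mul_one, hUUt]
  -- assemble: Sig⁻¹ = (Γ Uᵀ)ᵀ D⁻¹ (Γ Uᵀ)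
  set A : Matrix (Fin N × Fin M) (Fin N × Fin M) ℝ := Γ * Uᵀ with hA
  have hSiginv2 : Sig⁻¹ = Aᵀ * blkdiag (fun j => (E j)⁻¹) * A := by
    rw [hSiginv, hSinv, hDinv', hA, Matrix.transpose_mul, Matrix.transpose_transpose]
    simp only [Matrix.mul_assoc]
  have hΘ' : Θ = A *ᵥ Y := by rw [hΘ, hA, hUt]
  have key : Y ⬝ᵥ Sig⁻¹.mulVec Y = Θ ⬝ᵥ (blkdiag (fun j => (E j)⁻¹)) *ᵥ Θ := by
    rw [hSiginv2, hΘ', Matrix.mul_assoc, ← Matrix.mulVec_mulVec, ← Matrix.mulVec_mulVec,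
      Matrix.dotProduct_mulVec, Matrix.vecMul_transpose]
  rw [key]
  -- split the block quadratic form
  simp only [dotProduct, Matrix.mulVec, dotProduct, Fintype.sum_prod_type,
    blkdiag, Matrix.of_apply]
  refine Finset.sum_congr rfl fun j _ => Finset.sum_congr rfl fun m _ => ?_
  congr 1
  rw [Finset.sum_eq_single j]
  · simp
  · intro r _ hr; simp [Ne.symm hr]
  · simp
end

section
/- Let r, M be positive integers, F_D ∈ ℝ^{r×r}, H_D ∈ ℝ^{1×r}, G_D ∈ ℝ^{r×1}, let Σ_0 ∈ ℝ^{r×r} be symmetric positive semidefinite, let D ∈ ℝ^{M×M} be diagonal with nonnegative diagonal entries d_1, …, d_M, and let σ² > 0. Define F̄ = I_M ⊗ F_D, H̄ = D^{1/2}(I_M ⊗ H_D), Q = I_M ⊗ (G_D G_Dᵀ), and the Kalman filter covariance recursion: P_1 = I_M ⊗ (F_D Σ_0 F_Dᵀ + G_D G_Dᵀ), and for j ≥ 1, E_j = H̄ P_j H̄ᵀ + σ² I_M and P_{j+1} = F̄ (P_j − P_j H̄ᵀ E_j^{−1} H̄ P_j) F̄ᵀ + Q. Then for every j ≥ 1: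 (i) P_j is symmetric positive semidefinite and block diagonal with M diagonal blocks P_{j,1}, …, P_{j,M} ∈ ℝ^{r×r} (each symmetric positive semidefinite); and (ii) E_j is a diagonal matrix whose i-th diagonal entry equals d_i · H_D P_{j,i} H_Dᵀ + σ² ≥ σ² > 0, so E_j is positive definite and invertible. -/
/-!
Relabel the measurement space `Fin M` as `Fin M × Fin 1`, so that `H̄` becomes block diagonal
with `1 × r` blocks `√dᵢ H_D`, like `F̄` and `Q`. Sums, products, adjoints and inverses of block
diagonal matrices are block diagonal, so one step of the covariance recursion acts block by block
as the single-location recursion, and `E_j` is block diagonal with `1 × 1` blocks, i.e. diagonal.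
The blocks stay positive semidefinite because the posterior covariance `P - P Hᴴ E⁻¹ H P` is a
Schur complement in a positive semidefinite joint covariance.
-/

open Matrix
open scoped ComplexOrder Kronecker

namespace Matrix

section BlockDiagonalFst

variable {o m n p α : Type*} [DecidableEq o]

/-- `Matrix.blockDiagonal` with the block index in the first component of the row and column
indices, the layout of `1 ⊗ₖ B`. -/
def blockDiagonalFst [Zero α] (B : o → Matrix m n α) : Matrix (o × m) (o × n) α :=
  reindex (Equiv.prodComm m o) (Equiv.prodComm n o) (blockDiagonal B)

lemma blockDiagonalFst_apply [Zero α] (B : o → Matrix m n α) (p : o × m) (q : o × n) :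
    blockDiagonalFst B p q = if p.1 = q.1 then B p.1 p.2 q.2 else 0 := by
  simp [blockDiagonalFst, blockDiagonal_apply]

lemma one_kronecker_eq_blockDiagonalFst [MulZeroOneClass α] (B : Matrix m n α) :
    (1 : Matrix o o α) ⊗ₖ B = blockDiagonalFst fun _ => B :=
  one_kronecker B

lemma blockDiagonalFst_add [AddZeroClass α] (B C : o → Matrix m n α) :
    blockDiagonalFst B + blockDiagonalFst C = blockDiagonalFst (B + C) :=
  congrArg (reindex _ _) (blockDiagonal_add B C).symm

lemma blockDiagonalFst_sub [AddGroup α] (B C : o → Matrix m n α) :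
    blockDiagonalFst B - blockDiagonalFst C = blockDiagonalFst (B - C) :=
  congrArg (reindex _ _) (blockDiagonal_sub B C).symm

lemma blockDiagonalFst_smul {R : Type*} [Zero α] [SMulZeroClass R α] (x : R)
    (B : o → Matrix m n α) : x • blockDiagonalFst B = blockDiagonalFst (x • B) :=
  congrArg (reindex _ _) (blockDiagonal_smul x B).symm

lemma blockDiagonalFst_one [DecidableEq m] [Zero α] [One α] :
    blockDiagonalFst (1 : o → Matrix m m α) = 1 := by
  simp only [blockDiagonalFst, blockDiagonal_one, reindex_apply, submatrix_one_equiv]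

lemma blockDiagonalFst_conjTranspose [AddMonoid α] [StarAddMonoid α] (B : o → Matrix m n α) :
    (blockDiagonalFst B)ᴴ = blockDiagonalFst fun i => (B i)ᴴ := by
  simp [blockDiagonalFst, blockDiagonal_conjTranspose]

lemma blockDiagonalFst_mul [Fintype o] [Fintype n] [NonUnitalNonAssocSemiring α]
    (B : o → Matrix m n α) (C : o → Matrix n p α) :
    blockDiagonalFst B * blockDiagonalFst C = blockDiagonalFst fun i => B i * C i := by
  simp only [blockDiagonalFst, reindex_apply, submatrix_mul_equiv, blockDiagonal_mul]

lemma blockDiagonalFst_inv [Fintype o] [Fintype m] [DecidableEq m] [CommRing α]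
    {B : o → Matrix m m α} (hB : ∀ i, IsUnit (B i).det) :
    (blockDiagonalFst B)⁻¹ = blockDiagonalFst fun i => (B i)⁻¹ := by
  refine inv_eq_right_inv ?_
  rw [blockDiagonalFst_mul, ← blockDiagonalFst_one]
  exact congrArg _ (funext fun i => mul_nonsing_inv _ (hB i))

lemma reindex_prodUnique_blockDiagonalFst [Unique m] [Zero α] (B : o → Matrix m m α) :
    reindex (Equiv.prodUnique o m) (Equiv.prodUnique o m) (blockDiagonalFst B)
      = diagonal fun i => B i default default := by
  ext i j
  simp [blockDiagonalFst_apply, diagonal_apply]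

lemma diagonal_mul_reindex_one_kronecker [Fintype o] [Unique m] [CommSemiring α] (s : o → α)
    (H : Matrix m n α) :
    diagonal s * reindex (Equiv.prodUnique o m) (Equiv.refl (o × n)) ((1 : Matrix o o α) ⊗ₖ H)
      = reindex (Equiv.prodUnique o m) (Equiv.refl (o × n))
          (blockDiagonalFst fun i => s i • H) := by
  ext i ⟨j, b⟩
  simp [one_kronecker_eq_blockDiagonalFst, blockDiagonalFst_apply, diagonal_mul]

lemma PosSemidef.blockDiagonalFst {𝕜 : Type*} [Fintype o] [Fintype m] [DecidableEq m]
    [RCLike 𝕜] {B : o → Matrix m m 𝕜} (hB : ∀ i, (B i).PosSemidef) :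
    (blockDiagonalFst B).PosSemidef := by
  open scoped MatrixOrder in
  choose C hC using fun i => CStarAlgebra.nonneg_iff_eq_star_mul_self.mp (hB i).nonneg
  have hBC : Matrix.blockDiagonal B = (Matrix.blockDiagonal C)ᴴ * Matrix.blockDiagonal C := by
    rw [blockDiagonal_conjTranspose, ← blockDiagonal_mul]
    exact congrArg _ (funext hC)
  rw [Matrix.blockDiagonalFst, reindex_apply, posSemidef_submatrix_equiv, hBC]
  exact posSemidef_conjTranspose_mul_self _

end BlockDiagonalFst

lemma conjTranspose_reindex_mul_reindex_mul_reindex {m m' n α : Type*} [Fintype m]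
    [Fintype m'] [NonUnitalNonAssocSemiring α] [Star α] (e : m ≃ m') (H : Matrix m n α)
    (A : Matrix m m α) :
    (reindex e (Equiv.refl n) H)ᴴ * reindex e e A * reindex e (Equiv.refl n) H
      = Hᴴ * A * H := by
  ext a b
  simp only [mul_apply, reindex_apply, conjTranspose_apply, submatrix_apply, Equiv.refl_symm,
    Equiv.refl_apply, Finset.sum_mul]
  exact Fintype.sum_equiv e.symm _ _ fun i => Fintype.sum_equiv e.symm _ _ fun j => rfl

section Kalman

variable {o m m' n 𝕜 : Type*} [Fintype n] [DecidableEq m] [RCLike 𝕜]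

def innovationCov (σ2 : ℝ) (H : Matrix m n 𝕜) (P : Matrix n n 𝕜) : Matrix m m 𝕜 :=
  H * P * Hᴴ + σ2 • 1

lemma innovationCov_reindex [DecidableEq m'] (σ2 : ℝ) (e : m ≃ m') (H : Matrix m n 𝕜)
    (P : Matrix n n 𝕜) :
    innovationCov σ2 (reindex e (Equiv.refl n) H) P = reindex e e (innovationCov σ2 H P) := by
  ext i j
  simp [innovationCov, mul_apply, one_apply]

lemma innovationCov_blockDiagonalFst [Fintype o] [DecidableEq o] (σ2 : ℝ)
    (H : o → Matrix m n 𝕜) (B : o → Matrix n n 𝕜) :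
    innovationCov σ2 (blockDiagonalFst H) (blockDiagonalFst B)
      = blockDiagonalFst fun i => innovationCov σ2 (H i) (B i) := by
  rw [innovationCov, blockDiagonalFst_conjTranspose, blockDiagonalFst_mul, blockDiagonalFst_mul,
    ← blockDiagonalFst_one, blockDiagonalFst_smul, blockDiagonalFst_add]
  rfl

variable [Fintype m]

lemma PosSemidef.innovationCov_posDef {P : Matrix n n 𝕜} (hP : P.PosSemidef)
    (H : Matrix m n 𝕜) {σ2 : ℝ} (hσ2 : 0 < σ2) : (innovationCov σ2 H P).PosDef :=
  PosDef.posSemidef_add (hP.mul_mul_conjTranspose_same H) (PosDef.one.smul hσ2)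

noncomputable def kalmanPosterior (σ2 : ℝ) (H : Matrix m n 𝕜) (P : Matrix n n 𝕜) :
    Matrix n n 𝕜 :=
  P - P * (Hᴴ * (innovationCov σ2 H P)⁻¹ * H) * P

noncomputable def kalmanStep (σ2 : ℝ) (F : Matrix n n 𝕜) (H : Matrix m n 𝕜)
    (Q P : Matrix n n 𝕜) : Matrix n n 𝕜 :=
  F * kalmanPosterior σ2 H P * Fᴴ + Q

/-- The posterior covariance is the Schur complement of the PD block `innovationCov σ2 H P` in the
joint covariance of measurement and state, `[H; I] P [H; I]ᴴ + diag(σ² I, 0)`. -/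
lemma PosSemidef.kalmanPosterior [DecidableEq n] {P : Matrix n n 𝕜} (hP : P.PosSemidef)
    (H : Matrix m n 𝕜) {σ2 : ℝ} (hσ2 : 0 < σ2) : (kalmanPosterior σ2 H P).PosSemidef := by
  have hS := hP.innovationCov_posDef H hσ2
  have := hS.isUnit.invertible
  have hjoint : (fromBlocks (innovationCov σ2 H P) (H * P) (H * P)ᴴ P).PosSemidef := by
    have hsplit : fromBlocks (innovationCov σ2 H P) (H * P) (H * P)ᴴ P
        = fromRows H (1 : Matrix n n 𝕜) * P * (fromRows H 1)ᴴ
          + fromBlocks (σ2 • 1) 0 0 0 := by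
      rw [conjTranspose_fromRows_eq_fromCols_conjTranspose, fromRows_mul, fromRows_mul_fromCols,
        fromBlocks_add, conjTranspose_mul, hP.isHermitian.eq, innovationCov]
      simp
    rw [hsplit]
    refine (hP.mul_mul_conjTranspose_same _).add ?_
    rw [← diagonal_zero, ← diagonal_one, ← diagonal_smul, fromBlocks_diagonal]
    exact PosSemidef.diagonal fun i => by cases i <;> simp [RCLike.real_smul_eq_coe_mul, hσ2.le]
  rw [PosDef.fromBlocks₁₁ _ _ hS] at hjoint
  simpa [Matrix.kalmanPosterior, conjTranspose_mul, hP.isHermitian.eq, Matrix.mul_assoc]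
    using hjoint

lemma PosSemidef.kalmanStep [DecidableEq n] {P Q : Matrix n n 𝕜} (hP : P.PosSemidef)
    (hQ : Q.PosSemidef) (F : Matrix n n 𝕜) (H : Matrix m n 𝕜) {σ2 : ℝ} (hσ2 : 0 < σ2) :
    (kalmanStep σ2 F H Q P).PosSemidef :=
  ((hP.kalmanPosterior H hσ2).mul_mul_conjTranspose_same F).add hQ

lemma kalmanPosterior_reindex [Fintype m'] [DecidableEq m'] (σ2 : ℝ) (e : m ≃ m')
    (H : Matrix m n 𝕜) (P : Matrix n n 𝕜) :
    kalmanPosterior σ2 (reindex e (Equiv.refl n) H) P = kalmanPosterior σ2 H P := by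
  rw [kalmanPosterior, innovationCov_reindex, inv_reindex,
    conjTranspose_reindex_mul_reindex_mul_reindex, kalmanPosterior]

section BlockDiagonal

variable [Fintype o] [DecidableEq o] (H : o → Matrix m n 𝕜) {B : o → Matrix n n 𝕜}
  {σ2 : ℝ}

lemma kalmanPosterior_blockDiagonalFst (hB : ∀ i, (B i).PosSemidef) (hσ2 : 0 < σ2) :
    kalmanPosterior σ2 (blockDiagonalFst H) (blockDiagonalFst B)
      = blockDiagonalFst fun i => kalmanPosterior σ2 (H i) (B i) := by
  have hS (i : o) : IsUnit (innovationCov σ2 (H i) (B i)).det :=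
    (isUnit_iff_isUnit_det _).mp ((hB i).innovationCov_posDef (H i) hσ2).isUnit
  rw [kalmanPosterior, innovationCov_blockDiagonalFst, blockDiagonalFst_inv hS,
    blockDiagonalFst_conjTranspose, blockDiagonalFst_mul, blockDiagonalFst_mul,
    blockDiagonalFst_mul, blockDiagonalFst_mul, blockDiagonalFst_sub]
  rfl

lemma kalmanStep_blockDiagonalFst (F Q : o → Matrix n n 𝕜) (hB : ∀ i, (B i).PosSemidef)
    (hσ2 : 0 < σ2) :
    kalmanStep σ2 (blockDiagonalFst F) (blockDiagonalFst H) (blockDiagonalFst Q)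
        (blockDiagonalFst B)
      = blockDiagonalFst fun i => kalmanStep σ2 (F i) (H i) (Q i) (B i) := by
  rw [kalmanStep, kalmanPosterior_blockDiagonalFst H hB hσ2, blockDiagonalFst_conjTranspose,
    blockDiagonalFst_mul, blockDiagonalFst_mul, blockDiagonalFst_add]
  rfl

lemma exists_posSemidef_blockDiagonalFst_of_kalmanStep [DecidableEq n] (F Q : o → Matrix n n 𝕜)
    (hQ : ∀ i, (Q i).PosSemidef) (hσ2 : 0 < σ2) {P : ℕ → Matrix (o × n) (o × n) 𝕜} {k : ℕ}
    (hB : ∀ i, (B i).PosSemidef) (hPk : P k = blockDiagonalFst B)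
    (hP : ∀ j, k ≤ j → P (j + 1) =
      kalmanStep σ2 (blockDiagonalFst F) (blockDiagonalFst H) (blockDiagonalFst Q) (P j))
    (j : ℕ) (hj : k ≤ j) :
    ∃ B' : o → Matrix n n 𝕜, (∀ i, (B' i).PosSemidef) ∧ P j = blockDiagonalFst B' := by
  induction j, hj using Nat.le_induction with
  | base => exact ⟨B, hB, hPk⟩
  | succ j hj ih =>
    obtain ⟨B', hB', hPB'⟩ := ih
    exact ⟨fun i => kalmanStep σ2 (F i) (H i) (Q i) (B' i),
      fun i => (hB' i).kalmanStep (hQ i) (F i) (H i) hσ2,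
      by rw [hP j hj, hPB', kalmanStep_blockDiagonalFst H F Q hB' hσ2]⟩

end BlockDiagonal

end Kalman

lemma innovationCov_sqrt_smul {m n : Type*} [Fintype n] [DecidableEq m] (σ2 : ℝ) {d : ℝ}
    (hd : 0 ≤ d) (H : Matrix m n ℝ) (P : Matrix n n ℝ) :
    innovationCov σ2 (√d • H) P = d • (H * P * Hᴴ) + σ2 • 1 := by
  simp only [innovationCov, conjTranspose_smul, star_trivial, Matrix.smul_mul, Matrix.mul_smul,
    smul_smul, Real.mul_self_sqrt hd]

end Matrix

theorem kalman_covariances_block_diagonal_general (r M : ℕ)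
    (F_D : Matrix (Fin r) (Fin r) ℝ)
    (H_D : Matrix (Fin 1) (Fin r) ℝ)
    (G_D : Matrix (Fin r) (Fin 1) ℝ)
    (Sigma0 : Matrix (Fin r) (Fin r) ℝ) (hSigma0 : Sigma0.PosSemidef)
    (d : Fin M → ℝ) (hd : ∀ i, 0 ≤ d i)
    (σ2 : ℝ) (hσ2 : 0 < σ2)
    (Fbar : Matrix (Fin M × Fin r) (Fin M × Fin r) ℝ)
    (hF : Fbar = (1 : Matrix (Fin M) (Fin M) ℝ) ⊗ₖ F_D)
    (Hbar : Matrix (Fin M) (Fin M × Fin r) ℝ)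
    (hH : Hbar = Matrix.diagonal (fun i => Real.sqrt (d i)) *
      Matrix.reindex (Equiv.prodUnique (Fin M) (Fin 1)) (Equiv.refl (Fin M × Fin r))
        ((1 : Matrix (Fin M) (Fin M) ℝ) ⊗ₖ H_D))
    (Q : Matrix (Fin M × Fin r) (Fin M × Fin r) ℝ)
    (hQ : Q = (1 : Matrix (Fin M) (Fin M) ℝ) ⊗ₖ (G_D * G_Dᵀ))
    (P : ℕ → Matrix (Fin M × Fin r) (Fin M × Fin r) ℝ)
    (E : ℕ → Matrix (Fin M) (Fin M) ℝ)
    (hP1 : P 1 = (1 : Matrix (Fin M) (Fin M) ℝ) ⊗ₖ (F_D * Sigma0 * F_Dᵀ + G_D * G_Dᵀ))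
    (hE : ∀ j, 1 ≤ j → E j = Hbar * P j * Hbarᵀ + σ2 • (1 : Matrix (Fin M) (Fin M) ℝ))
    (hPsucc : ∀ j, 1 ≤ j →
      P (j + 1) = Fbar * (P j - P j * Hbarᵀ * (E j)⁻¹ * Hbar * P j) * Fbarᵀ + Q) :
    ∀ j, 1 ≤ j →
      (P j).PosSemidef ∧
      ∃ B : Fin M → Matrix (Fin r) (Fin r) ℝ,
        (∀ i, (B i).PosSemidef) ∧
        (∀ p q : Fin M × Fin r, P j p q = if p.1 = q.1 then B p.1 p.2 q.2 else 0) ∧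
        E j = Matrix.diagonal (fun i => d i * (H_D * B i * H_Dᵀ) 0 0 + σ2) ∧
        (∀ i, σ2 ≤ d i * (H_D * B i * H_Dᵀ) 0 0 + σ2) ∧
        (E j).PosDef ∧ IsUnit (E j).det := by
  simp only [← conjTranspose_eq_transpose_of_trivial] at *
  set e := Equiv.prodUnique (Fin M) (Fin 1)
  set h : Fin M → Matrix (Fin 1) (Fin r) ℝ := fun i => √(d i) • H_D
  have hHbar : Hbar = reindex e (Equiv.refl _) (blockDiagonalFst h) := by
    rw [hH, diagonal_mul_reindex_one_kronecker]
  have hstep (j : ℕ) (hj : 1 ≤ j) : P (j + 1) = kalmanStep σ2 (blockDiagonalFst fun _ => F_D)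
      (blockDiagonalFst h) (blockDiagonalFst fun _ => G_D * G_Dᴴ) (P j) := by
    rw [hPsucc j hj, kalmanStep, ← kalmanPosterior_reindex σ2 e, ← hHbar, kalmanPosterior,
      innovationCov, ← hE j hj, hF, hQ, one_kronecker_eq_blockDiagonalFst,
      one_kronecker_eq_blockDiagonalFst]
    simp only [Matrix.mul_assoc]
  have hGG : (G_D * G_Dᴴ).PosSemidef := posSemidef_self_mul_conjTranspose G_D
  intro j hj
  obtain ⟨B, hB, hPB⟩ := exists_posSemidef_blockDiagonalFst_of_kalmanStep h _ _ (fun _ => hGG)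
    hσ2 (fun _ => (hSigma0.mul_mul_conjTranspose_same F_D).add hGG)
    (by rw [hP1, one_kronecker_eq_blockDiagonalFst]) hstep j hj
  have hEdiag : E j = diagonal fun i => d i * (H_D * B i * H_Dᴴ) 0 0 + σ2 := by
    rw [hE j hj, hHbar, hPB, ← innovationCov, innovationCov_reindex,
      innovationCov_blockDiagonalFst, reindex_prodUnique_blockDiagonalFst]
    simp [h, innovationCov_sqrt_smul σ2 (hd _)]
  have hle (i : Fin M) : σ2 ≤ d i * (H_D * B i * H_Dᴴ) 0 0 + σ2 :=
    le_add_of_nonneg_left (mul_nonneg (hd i) ((hB i).mul_mul_conjTranspose_same H_D).diag_nonneg)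
  have hEpos : (E j).PosDef := hEdiag ▸ posDef_diagonal_iff.mpr fun i => hσ2.trans_le (hle i)
  exact ⟨hPB ▸ PosSemidef.blockDiagonalFst hB, B, hB,
    fun p q => by rw [hPB, blockDiagonalFst_apply], hEdiag, hle, hEpos, hEpos.det_pos.ne'.isUnit⟩

/-- Structural claim in the proof of Theorem 1: for the transformed Kalman filter covariance
recursion with `F̄ = I_M ⊗ F_D`, `H̄ = D^{1/2}(I_M ⊗ H_D)`, `Q = I_M ⊗ (G_D G_Dᵀ)`,
`P₁ = I_M ⊗ (F_D Σ₀ F_Dᵀ + G_D G_Dᵀ)`, `E_j = H̄ P_j H̄ᵀ + σ² I_M` and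
`P_{j+1} = F̄ (P_j − P_j H̄ᵀ E_j⁻¹ H̄ P_j) F̄ᵀ + Q`, every `P_j` is symmetric positive
semidefinite and block diagonal with `M` symmetric positive semidefinite `r×r` blocks
`P_{j,1}, …, P_{j,M}`, and every `E_j` is diagonal with `i`-th diagonal entry
`d_i · H_D P_{j,i} H_Dᵀ + σ² ≥ σ² > 0`, hence positive definite and invertible. -/
theorem kalman_covariances_block_diagonal (r M : ℕ) (hr : 0 < r) (hM : 0 < M)
    (F_D : Matrix (Fin r) (Fin r) ℝ)
    (H_D : Matrix (Fin 1) (Fin r) ℝ)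
    (G_D : Matrix (Fin r) (Fin 1) ℝ)
    (Sigma0 : Matrix (Fin r) (Fin r) ℝ) (hSigma0 : Sigma0.PosSemidef)
    (d : Fin M → ℝ) (hd : ∀ i, 0 ≤ d i)
    (σ2 : ℝ) (hσ2 : 0 < σ2)
    (Fbar : Matrix (Fin M × Fin r) (Fin M × Fin r) ℝ)
    (hF : Fbar = (1 : Matrix (Fin M) (Fin M) ℝ) ⊗ₖ F_D)
    (Hbar : Matrix (Fin M) (Fin M × Fin r) ℝ)
    (hH : Hbar = Matrix.diagonal (fun i => Real.sqrt (d i)) *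
      Matrix.reindex (Equiv.prodUnique (Fin M) (Fin 1)) (Equiv.refl (Fin M × Fin r))
        ((1 : Matrix (Fin M) (Fin M) ℝ) ⊗ₖ H_D))
    (Q : Matrix (Fin M × Fin r) (Fin M × Fin r) ℝ)
    (hQ : Q = (1 : Matrix (Fin M) (Fin M) ℝ) ⊗ₖ (G_D * G_Dᵀ))
    (P : ℕ → Matrix (Fin M × Fin r) (Fin M × Fin r) ℝ)
    (E : ℕ → Matrix (Fin M) (Fin M) ℝ)
    (hP1 : P 1 = (1 : Matrix (Fin M) (Fin M) ℝ) ⊗ₖ (F_D * Sigma0 * F_Dᵀ + G_D * G_Dᵀ))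
    (hE : ∀ j, 1 ≤ j → E j = Hbar * P j * Hbarᵀ + σ2 • (1 : Matrix (Fin M) (Fin M) ℝ))
    (hPsucc : ∀ j, 1 ≤ j →
      P (j + 1) = Fbar * (P j - P j * Hbarᵀ * (E j)⁻¹ * Hbar * P j) * Fbarᵀ + Q) :
    ∀ j, 1 ≤ j →
      (P j).PosSemidef ∧
      ∃ B : Fin M → Matrix (Fin r) (Fin r) ℝ,
        (∀ i, (B i).PosSemidef) ∧
        (∀ p q : Fin M × Fin r, P j p q = if p.1 = q.1 then B p.1 p.2 q.2 else 0) ∧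
        E j = Matrix.diagonal (fun i => d i * (H_D * B i * H_Dᵀ) 0 0 + σ2) ∧
        (∀ i, σ2 ≤ d i * (H_D * B i * H_Dᵀ) 0 0 + σ2) ∧
        (E j).PosDef ∧ IsUnit (E j).det :=
  kalman_covariances_block_diagonal_general r M F_D H_D G_D Sigma0 hSigma0 d hd σ2 hσ2 Fbar hF Hbar
    hH Q hQ P E hP1 hE hPsucc
end

section
/- Fix real numbers δ > 0, c ∈ (0, 1), σ > 0, and f ∈ ℝ, and define k: ℝ → ℝ by k(τ) = δ·[(1 − c + (3/4)c²) + (c − c²)·cos(2πf τ) + (c²/4)·cos(4πf τ)]·exp(−|τ|/σ). Then k is a positive semidefinite kernel: for every positive integer n and all t_1, …, t_n ∈ ℝ, the n×n matrix with (i, j) entry k(t_i − t_j) is symmetric positive semidefinite. -/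
/-!
The kernel is the entrywise product of the periodic factor and the exponential factor, so by the
Schur product theorem it suffices that each factor is positive semidefinite. The periodic factor is
a combination of `1`, `cos (ωτ)` and `cos (2ωτ)` with coefficients that are nonnegative for
`c ∈ (0, 1)`, and `cos (ω (s - t)) = cos ωs cos ωt + sin ωs sin ωt` is a sum of two rank-one
kernels. The exponential factor is `exp (-|s - t|) = e^{-s} e^{-t} min (e^{2s}, e^{2t})`, a rank-one
kernel times the min kernel, and `min a b = ⟪1_(0,a], 1_(0,b]⟫` in `L²(ℝ)` is a Gram kernel.
-/

open Matrix MeasureTheory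

theorem neg_abs_sub_eq_two_mul_min (s t : ℝ) : -|s - t| = -s + -t + 2 * min s t := by
  rcases le_total s t with h | h
  · rw [abs_of_nonpos (sub_nonpos.2 h), min_eq_left h]; ring
  · rw [abs_of_nonneg (sub_nonneg.2 h), min_eq_right h]; ring

namespace Matrix

variable {ι : Type*} [Finite ι]

theorem posSemidef_min_of_nonneg (a : ι → ℝ) (ha : ∀ i, 0 ≤ a i) :
    (of fun i j => min (a i) (a j)).PosSemidef := by
  let v : ι → Lp ℝ 2 (volume : Measure ℝ) := fun i =>
    indicatorConstLp 2 (measurableSet_Ioc (a := 0) (b := a i)) measure_Ioc_lt_top.ne 1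
  have hv : gram ℝ v = of fun i j => min (a i) (a j) := by
    ext i j
    rw [gram_apply, L2.inner_indicatorConstLp_one_indicatorConstLp_one _ _ measure_Ioc_lt_top.ne
      measure_Ioc_lt_top.ne, Set.Ioc_inter_Ioc, max_self,
      Real.volume_real_Ioc_of_le (le_min (ha i) (ha j))]
    simp
  exact hv ▸ posSemidef_gram ℝ v

theorem posSemidef_exp_neg_abs_sub (x : ι → ℝ) :
    (of fun i j => Real.exp (-|x i - x j|)).PosSemidef := by
  have hrank : (vecMulVec (fun i => Real.exp (-x i)) (fun i => Real.exp (-x i))).PosSemidef :=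
    posSemidef_vecMulVec_self_star _
  have hmin :=
    posSemidef_min_of_nonneg (fun i => Real.exp (2 * x i)) fun i => (Real.exp_pos _).le
  have hfactor : (of fun i j => Real.exp (-|x i - x j|)) =
      vecMulVec (fun i => Real.exp (-x i)) (fun i => Real.exp (-x i)) ⊙
        of fun i j => min (Real.exp (2 * x i)) (Real.exp (2 * x j)) := by
    ext i j
    rw [of_apply, hadamard_apply, vecMulVec_apply, of_apply, ← Real.exp_monotone.map_min,
      ← Real.exp_add, ← Real.exp_add, ← mul_min_of_nonneg _ _ zero_le_two,
      neg_abs_sub_eq_two_mul_min]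
  exact hfactor ▸ hrank.hadamard hmin

theorem posSemidef_exp_neg_abs_sub_div {σ : ℝ} (hσ : 0 < σ) (t : ι → ℝ) :
    (of fun i j => Real.exp (-|t i - t j| / σ)).PosSemidef := by
  have hscale : ∀ i j, -|t i - t j| / σ = -|t i / σ - t j / σ| := fun i j => by
    rw [← sub_div, abs_div, abs_of_pos hσ, neg_div]
  simpa only [hscale] using posSemidef_exp_neg_abs_sub fun i => t i / σ

theorem posSemidef_cos_mul_sub (ω : ℝ) (t : ι → ℝ) :
    (of fun i j => Real.cos (ω * (t i - t j))).PosSemidef := by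
  have hcos : (vecMulVec (fun i => Real.cos (ω * t i)) (fun i => Real.cos (ω * t i))).PosSemidef :=
    posSemidef_vecMulVec_self_star _
  have hsin : (vecMulVec (fun i => Real.sin (ω * t i)) (fun i => Real.sin (ω * t i))).PosSemidef :=
    posSemidef_vecMulVec_self_star _
  have hsplit : (of fun i j => Real.cos (ω * (t i - t j))) =
      vecMulVec (fun i => Real.cos (ω * t i)) (fun i => Real.cos (ω * t i)) +
        vecMulVec (fun i => Real.sin (ω * t i)) (fun i => Real.sin (ω * t i)) := by
    ext i j
    rw [of_apply, add_apply, vecMulVec_apply, vecMulVec_apply, mul_sub, Real.cos_sub]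
  exact hsplit ▸ hcos.add hsin

end Matrix

/-- The designed temporal kernel
`k(τ) = δ [(1 - c + (3/4)c²) + (c - c²) cos(2πf τ) + (c²/4) cos(4πf τ)] e^{-|τ|/σ}`
with `δ > 0`, `c ∈ (0,1)`, `σ > 0`, `f ∈ ℝ` is a positive semidefinite kernel: every
Gram matrix `[k(t_i - t_j)]` is symmetric positive semidefinite. -/
theorem designed_temporal_kernel_posSemidef
    (δ c σ f : ℝ) (hδ : 0 < δ) (hc : c ∈ Set.Ioo (0 : ℝ) 1) (hσ : 0 < σ)
    (k : ℝ → ℝ)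
    (hk : ∀ τ : ℝ, k τ =
      δ * ((1 - c + (3 / 4) * c ^ 2)
            + (c - c ^ 2) * Real.cos (2 * Real.pi * f * τ)
            + (c ^ 2 / 4) * Real.cos (4 * Real.pi * f * τ))
        * Real.exp (-|τ| / σ)) :
    ∀ (n : ℕ), 0 < n → ∀ t : Fin n → ℝ,
      (Matrix.of fun i j : Fin n => k (t i - t j)).PosSemidef := by
  intro n _ t
  have hA : 0 ≤ 1 - c + (3 / 4) * c ^ 2 := by nlinarith [sq_nonneg (c - 2 / 3)]
  have hB : 0 ≤ c - c ^ 2 := by nlinarith [hc.1, hc.2]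
  have hC : 0 ≤ c ^ 2 / 4 := by positivity
  have hperiodic := (((posSemidef_vecMulVec_self_star (1 : Fin n → ℝ)).smul hA).add
    ((posSemidef_cos_mul_sub (2 * Real.pi * f) t).smul hB)).add
    ((posSemidef_cos_mul_sub (4 * Real.pi * f) t).smul hC)
  have hfactor : (of fun i j => k (t i - t j)) = δ • ((
      (1 - c + (3 / 4) * c ^ 2) • vecMulVec 1 (star 1)
        + (c - c ^ 2) • of (fun i j => Real.cos (2 * Real.pi * f * (t i - t j)))
        + (c ^ 2 / 4) • of (fun i j => Real.cos (4 * Real.pi * f * (t i - t j))))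
      ⊙ of fun i j => Real.exp (-|t i - t j| / σ)) := by
    ext i j
    simp only [hk, of_apply, Matrix.smul_apply, hadamard_apply, Matrix.add_apply, vecMulVec_apply,
      Pi.one_apply, star_one, smul_eq_mul]
    ring
  exact hfactor ▸ (hperiodic.hadamard (posSemidef_exp_neg_abs_sub_div hσ t)).smul hδ.le
end
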